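/- arXiv:math/0507541 — 2 statements merged into one kernel-verified Lean document; each statement's English description precedes it below -/
import Mathlib

section
/- Let g(y) = y^d + b_2 y^{d-2} + ... + b_{d-1} y with integer coefficients, d ≥ 3 odd. Suppose κ_2, κ_3, λ_2, λ_3, μ_1, μ_2, μ_3 ∈ ℚ, ε ∈ {±1}, c ∈ ℚ are such that g(t^2 + μ_1) + g(κ_2 t^2 + λ_2 t + μ_2) − ε·g(κ_3 t^2 + λ_3 t + μ_3) − c vanishes identically, and κ_3 = 0. Then κ_2 = −1, λ_2 = 0, μ_2 = −μ_1 and λ_3 = 0. -/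
open Polynomial

private lemma tri_mul_coeff (a b c : ℚ) (q : ℚ[X]) (k : ℕ) :
    ((C a * X ^ 2 + C b * X + C c) * q).coeff (k + 2) =
      a * q.coeff k + b * q.coeff (k + 1) + c * q.coeff (k + 2) := by
  rw [add_mul, add_mul, coeff_add, coeff_add, mul_assoc, coeff_C_mul, coeff_X_pow_mul,
    mul_assoc, coeff_C_mul, coeff_C_mul]
  congr 2
  rw [show k + 2 = k + 1 + 1 by ring, coeff_X_mul]

private lemma tri_natDegree_le (a b c : ℚ) :
    (C a * X ^ 2 + C b * X + C c).natDegree ≤ 2 := by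
  compute_degree

private lemma tri_coeff_zero (a b c : ℚ) (n m : ℕ) (hm : 2 * n < m) :
    ((C a * X ^ 2 + C b * X + C c) ^ n).coeff m = 0 := by
  apply coeff_eq_zero_of_natDegree_lt
  calc ((C a * X ^ 2 + C b * X + C c) ^ n).natDegree ≤ n * (C a * X ^ 2 + C b * X + C c).natDegree :=
        natDegree_pow_le
    _ ≤ n * 2 := Nat.mul_le_mul_left n (tri_natDegree_le a b c)
    _ < m := by omega

private lemma coeffA (a b c : ℚ) (n : ℕ) :
    ((C a * X ^ 2 + C b * X + C c) ^ (n + 1)).coeff (2 * n + 2) = a ^ (n + 1) := by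
  induction n with
  | zero => simp [coeff_C_mul, coeff_X_pow]
  | succ n ih =>
      rw [pow_succ, mul_comm, show 2 * (n + 1) + 2 = 2 * n + 2 + 2 by ring, tri_mul_coeff,
        ih, tri_coeff_zero _ _ _ _ _ (by omega), tri_coeff_zero _ _ _ _ _ (by omega)]
      ring

private lemma coeffB (a b c : ℚ) (n : ℕ) :
    ((C a * X ^ 2 + C b * X + C c) ^ (n + 1)).coeff (2 * n + 1) = (n + 1 : ℚ) * a ^ n * b := by
  induction n with
  | zero => simp [coeff_C_mul, coeff_X_pow]
  | succ n ih =>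
      rw [pow_succ, mul_comm, show 2 * (n + 1) + 1 = 2 * n + 1 + 2 by ring, tri_mul_coeff,
        ih, show 2 * n + 1 + 1 = 2 * n + 2 by ring, coeffA,
        tri_coeff_zero _ _ _ _ _ (by omega)]
      push_cast
      ring

private lemma coeffC (a c : ℚ) (n : ℕ) :
    ((C a * X ^ 2 + C 0 * X + C c) ^ (n + 1)).coeff (2 * n) = (n + 1 : ℚ) * a ^ n * c := by
  induction n with
  | zero => simp
  | succ n ih =>
      rw [pow_succ, mul_comm, show 2 * (n + 1) = 2 * n + 2 by ring, tri_mul_coeff,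
        ih, show 2 * n + 1 + 1 = 2 * n + 2 by ring, coeffA]
      push_cast
      ring

private lemma even_comp_coeff (q : ℚ[X]) (μ : ℚ) (m : ℕ) (hm : ¬ 2 ∣ m) :
    (q.comp (X ^ 2 + C μ)).coeff m = 0 := by
  have h1 : (X ^ 2 + C μ : ℚ[X]) = (X + C μ).comp (X ^ 2) := by simp
  rw [h1, ← comp_assoc, ← expand_eq_comp_X_pow, coeff_expand (by norm_num)]
  simp [hm]

/-- Let `g(y) = y^d + b₂ y^{d-2} + ⋯ + b_{d-1} y` over `ℤ`, with `d ≥ 3` odd.  If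
`g(t² + μ₁) + g(κ₂ t² + λ₂ t + μ₂) − ε g(κ₃ t² + λ₃ t + μ₃) − c` vanishes identically
over `ℚ` with `ε = ±1` and `κ₃ = 0`, then `κ₂ = −1`, `λ₂ = 0`, `μ₂ = −μ₁` and `λ₃ = 0`. -/
theorem stmt7 (d : ℕ) (hd : 3 ≤ d) (hodd : Odd d) (g : Polynomial ℤ) (hmonic : g.Monic)
    (hdeg : g.natDegree = d) (hcd1 : g.coeff (d - 1) = 0) (hc0 : g.coeff 0 = 0)
    (kap2 kap3 lam2 lam3 mu1 mu2 mu3 c ε : ℚ) (hε : ε = 1 ∨ ε = -1)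
    (hiden :
      (g.map (Int.castRingHom ℚ)).comp (X ^ 2 + C mu1) +
          (g.map (Int.castRingHom ℚ)).comp (C kap2 * X ^ 2 + C lam2 * X + C mu2) -
          C ε * (g.map (Int.castRingHom ℚ)).comp (C kap3 * X ^ 2 + C lam3 * X + C mu3) -
          C c = 0)
    (hkap3 : kap3 = 0) :
    kap2 = -1 ∧ lam2 = 0 ∧ mu2 = -mu1 ∧ lam3 = 0 := by
  subst hkap3
  obtain ⟨e, rfl⟩ : ∃ e, d = e + 3 := ⟨d - 3, by omega⟩
  set G : ℚ[X] := g.map (Int.castRingHom ℚ) with hGdef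
  have hGmonic : G.Monic := hmonic.map _
  have hGdeg : G.natDegree = e + 3 := by
    rw [hGdef, hmonic.natDegree_map, hdeg]
  have hGd1 : G.coeff (e + 2) = 0 := by
    rw [hGdef, coeff_map, show e + 2 = e + 3 - 1 from rfl, hcd1]; simp
  set G₁ : ℚ[X] := G - X ^ (e + 3) with hG₁def
  have hG₁deg : G₁.natDegree ≤ e + 1 := by
    apply natDegree_le_iff_coeff_eq_zero.mpr
    intro N hN
    rw [hG₁def, coeff_sub, coeff_X_pow]
    rcases lt_trichotomy N (e + 3) with h | h | h
    · have : N = e + 2 := by omega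
      subst this
      rw [hGd1, if_neg (by omega)]
      simp
    · subst h
      rw [← hGdeg, coeff_natDegree, hGmonic.leadingCoeff]
      simp
    · rw [coeff_eq_zero_of_natDegree_lt (by omega : G.natDegree < N), if_neg (by omega)]
      simp
  have hsplit : ∀ p : ℚ[X], G.comp p = p ^ (e + 3) + G₁.comp p := by
    intro p
    conv_lhs => rw [show G = X ^ (e + 3) + G₁ by rw [hG₁def]; ring]
    rw [add_comp, X_pow_comp]
  have hcb : ∀ (a b cc : ℚ) (m : ℕ), 2 * e + 2 < m →
      (G₁.comp (C a * X ^ 2 + C b * X + C cc)).coeff m = 0 := by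
    intro a b cc m hm
    apply coeff_eq_zero_of_natDegree_lt
    calc (G₁.comp (C a * X ^ 2 + C b * X + C cc)).natDegree
        ≤ G₁.natDegree * (C a * X ^ 2 + C b * X + C cc).natDegree := natDegree_comp_le
      _ ≤ (e + 1) * 2 := Nat.mul_le_mul hG₁deg (tri_natDegree_le a b cc)
      _ < m := by omega
  have hp3deg : (C (0:ℚ) * X ^ 2 + C lam3 * X + C mu3).natDegree ≤ 1 := by
    simp only [map_zero, zero_mul, zero_add]
    compute_degree
  have hp3 : ∀ m : ℕ, e + 3 < m →
      (G.comp (C (0:ℚ) * X ^ 2 + C lam3 * X + C mu3)).coeff m = 0 := by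
    intro m hm
    apply coeff_eq_zero_of_natDegree_lt
    calc (G.comp _).natDegree ≤ G.natDegree * (C (0:ℚ) * X ^ 2 + C lam3 * X + C mu3).natDegree :=
        natDegree_comp_le
      _ ≤ (e + 3) * 1 := Nat.mul_le_mul hGdeg.le hp3deg
      _ < m := by omega
  rw [show (X ^ 2 + C mu1 : ℚ[X]) = C 1 * X ^ 2 + C 0 * X + C mu1 by simp] at hiden
  have hco : ∀ m : ℕ,
      (G.comp (C 1 * X ^ 2 + C 0 * X + C mu1)).coeff m +
        (G.comp (C kap2 * X ^ 2 + C lam2 * X + C mu2)).coeff m -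
        ε * (G.comp (C 0 * X ^ 2 + C lam3 * X + C mu3)).coeff m - (C c).coeff m = 0 := by
    intro m
    have h := congrArg (fun q : ℚ[X] => q.coeff m) hiden
    simpa only [coeff_add, coeff_sub, coeff_C_mul, coeff_zero] using h
  have heven2 : ((-1 : ℚ)) ^ (e + 2) = 1 := by
    obtain ⟨k, hk⟩ := hodd
    have : e + 2 = 2 * k := by omega
    rw [this, pow_mul]; norm_num
  have hne : ((e : ℚ) + 3) ≠ 0 := by positivity
  -- coefficient at 2e+6 : kap2 = -1
  have E1 := hco (2 * e + 6)
  rw [hsplit, hsplit, coeff_add, coeff_add, hcb _ _ _ _ (by omega), hcb _ _ _ _ (by omega),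
    hp3 _ (by omega), coeff_C] at E1
  rw [show 2 * e + 6 = 2 * (e + 2) + 2 by ring] at E1
  rw [coeffA, coeffA] at E1
  simp only [if_neg (by omega : ¬ 2 * (e + 2) + 2 = 0), one_pow, mul_zero, sub_zero,
    add_zero] at E1
  have hk2 : kap2 = -1 := by
    have h1 : kap2 ^ (e + 3) = (-1 : ℚ) ^ (e + 3) := by
      rw [Odd.neg_one_pow hodd]; linarith
    exact hodd.strictMono_pow.injective h1
  subst hk2
  -- coefficient at 2e+5 : lam2 = 0
  have E2 := hco (2 * e + 5)
  rw [hsplit, hsplit, coeff_add, coeff_add, hcb _ _ _ _ (by omega), hcb _ _ _ _ (by omega),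
    hp3 _ (by omega), coeff_C] at E2
  rw [show 2 * e + 5 = 2 * (e + 2) + 1 by ring] at E2
  rw [coeffB, coeffB] at E2
  simp only [if_neg (by omega : ¬ 2 * (e + 2) + 1 = 0), mul_zero, sub_zero, add_zero,
    zero_add, heven2, mul_one] at E2
  have hl2 : lam2 = 0 := by
    have : ((e : ℚ) + 2 + 1) * lam2 = 0 := by push_cast at E2 ⊢; linarith
    rcases mul_eq_zero.mp this with h | h
    · exfalso; apply hne; push_cast; linarith
    · exact h
  subst hl2
  -- coefficient at 2e+4 : mu2 = -mu1
  have E3 := hco (2 * e + 4)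
  rw [hsplit, hsplit, coeff_add, coeff_add, hcb _ _ _ _ (by omega), hcb _ _ _ _ (by omega),
    hp3 _ (by omega), coeff_C] at E3
  rw [show 2 * e + 4 = 2 * (e + 2) by ring] at E3
  rw [coeffC, coeffC] at E3
  simp only [if_neg (by omega : ¬ 2 * (e + 2) = 0), mul_zero, sub_zero, one_pow,
    heven2, mul_one] at E3
  have hm2 : mu2 = -mu1 := by
    have h1 : ((e : ℚ) + 2 + 1) * (mu1 + mu2) = 0 := by push_cast at E3 ⊢; ring_nf; ring_nf at E3; linarith
    rcases mul_eq_zero.mp h1 with h | h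
    · exfalso; apply hne; push_cast; linarith
    · linarith
  subst hm2
  -- coefficient at e+3 : lam3 = 0
  refine ⟨rfl, rfl, rfl, ?_⟩
  have hnd : ¬ 2 ∣ (e + 3) := by
    obtain ⟨k, hk⟩ := hodd
    intro ⟨j, hj⟩
    omega
  have E4 := hco (e + 3)
  have hev1 : (G.comp (C 1 * X ^ 2 + C 0 * X + C mu1)).coeff (e + 3) = 0 := by
    rw [show (C 1 * X ^ 2 + C 0 * X + C mu1 : ℚ[X]) = X ^ 2 + C mu1 by simp]
    exact even_comp_coeff G mu1 _ hnd
  have hev2 : (G.comp (C (-1) * X ^ 2 + C 0 * X + C (-mu1))).coeff (e + 3) = 0 := by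
    rw [show (C (-1) * X ^ 2 + C 0 * X + C (-mu1) : ℚ[X]) = (-X).comp (X ^ 2 + C mu1) by
      simp; ring]
    rw [← comp_assoc]
    exact even_comp_coeff (G.comp (-X)) mu1 _ hnd
  have hlin : (G.comp (C (0:ℚ) * X ^ 2 + C lam3 * X + C mu3)).coeff (e + 3) = lam3 ^ (e + 3) := by
    by_cases hl : lam3 = 0
    · subst hl
      simp only [map_zero, zero_mul, zero_add, comp_C]
      rw [coeff_C, if_neg (by omega), zero_pow (by omega)]
    · have hdq : (C (0:ℚ) * X ^ 2 + C lam3 * X + C mu3).natDegree = 1 := by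
        simp only [map_zero, zero_mul, zero_add]
        exact natDegree_linear hl
      have := coeff_comp_degree_mul_degree (p := G)
        (q := C (0:ℚ) * X ^ 2 + C lam3 * X + C mu3) (by rw [hdq]; omega)
      rw [hdq, mul_one, hGdeg, hGmonic.leadingCoeff, one_mul] at this
      rw [this]
      congr 1
      simp only [map_zero, zero_mul, zero_add]
      exact leadingCoeff_linear hl
  rw [hev1, hev2, hlin, coeff_C, if_neg (by omega)] at E4
  have hl3 : lam3 ^ (e + 3) = 0 := by
    rcases hε with h | h <;> subst h <;> linarith
  exact pow_eq_zero_iff (by omega) |>.mp hl3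
end

section
/- Let g(y) = y^d + b_2 y^{d-2} + ... + b_{d-1} y with integer coefficients, d ≥ 3. The polynomial g(y_2) − g(y_4) ∈ ℚ[y_2, y_4] has no irreducible factor over ℚ of degree 1 other than (scalar multiples of) y_2 − y_4 and, when d is even, y_2 + y_4. -/
open Polynomial

private lemma iter_deriv_comp_linear (l m : ℚ) (n : ℕ) :
    ∀ p : ℚ[X], derivative^[n] (p.comp (C m + C l * X)) =
      C (l ^ n) * (derivative^[n] p).comp (C m + C l * X) := by
  induction n with
  | zero => intro p; simp
  | succ n ih =>
    intro p
    rw [Function.iterate_succ_apply, Function.iterate_succ_apply, derivative_comp]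
    have hq : derivative (C m + C l * X) = C l := by simp
    rw [hq, Polynomial.iterate_derivative_C_mul, ih (derivative p), ← mul_assoc, ← C_mul,
      mul_comm l (l ^ n), ← pow_succ]

private lemma degle_one_decomp (L : MvPolynomial (Fin 2) ℚ) (hL : L.totalDegree ≤ 1) :
    L = MvPolynomial.C (L.coeff 0) +
      MvPolynomial.C (L.coeff (Finsupp.single 0 1)) * MvPolynomial.X 0 +
      MvPolynomial.C (L.coeff (Finsupp.single 1 1)) * MvPolynomial.X 1 := by
  apply MvPolynomial.ext
  intro m
  rw [MvPolynomial.coeff_add, MvPolynomial.coeff_add, MvPolynomial.coeff_C,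
    MvPolynomial.coeff_C_mul, MvPolynomial.coeff_C_mul, MvPolynomial.coeff_X',
    MvPolynomial.coeff_X']
  have hsum : ∑ i ∈ m.support, m i = m 0 + m 1 := by
    rw [Finset.sum_subset (Finset.subset_univ m.support)
      (by intro x _ hx; simpa using Finsupp.notMem_support_iff.mp hx)]
    exact Fin.sum_univ_two m
  by_cases h2 : 2 ≤ m 0 + m 1
  · rw [MvPolynomial.coeff_eq_zero_of_totalDegree_lt (by rw [hsum]; omega)]
    rw [if_neg, if_neg, if_neg]
    · ring
    · intro h; rw [← h] at h2; simp [Finsupp.single_apply] at h2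
    · intro h; rw [← h] at h2; simp [Finsupp.single_apply] at h2
    · intro h; rw [← h] at h2; simp at h2
  · have hcase : m 0 = 0 ∧ m 1 = 0 ∨ m 0 = 1 ∧ m 1 = 0 ∨ m 0 = 0 ∧ m 1 = 1 := by omega
    rcases hcase with ⟨h0, h1⟩ | ⟨h0, h1⟩ | ⟨h0, h1⟩
    · have hm : m = 0 := by
        ext i; fin_cases i <;> simpa
      subst hm; simp
    · have hm : m = Finsupp.single 0 1 := by
        ext i; fin_cases i <;> simp [Finsupp.single_apply] <;> assumption
      subst hm; simp [Finsupp.single_eq_single_iff]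
      intro h; have := DFunLike.congr_fun h 0; simp at this
    · have hm : m = Finsupp.single 1 1 := by
        ext i; fin_cases i <;> simp [Finsupp.single_apply] <;> assumption
      subst hm; simp [Finsupp.single_eq_single_iff]
      intro h; have := DFunLike.congr_fun h 1; simp at this

/-- Let `g(y) = y^d + b₂ y^{d-2} + ⋯ + b_{d-1} y` over `ℤ` with `d ≥ 3`.  Then the
polynomial `g(y₂) − g(y₄) ∈ ℚ[y₂, y₄]` has no irreducible degree-one factor over `ℚ`
other than scalar multiples of `y₂ − y₄` and, when `d` is even, `y₂ + y₄`. -/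
theorem stmt15 (d : ℕ) (hd : 3 ≤ d) (g : Polynomial ℤ) (hmonic : g.Monic)
    (hdeg : g.natDegree = d) (hcd1 : g.coeff (d - 1) = 0) (hc0 : g.coeff 0 = 0)
    (L : MvPolynomial (Fin 2) ℚ) (hirr : Irreducible L) (hL : L.totalDegree = 1)
    (hdvd : L ∣
      Polynomial.aeval (MvPolynomial.X 0) (g.map (Int.castRingHom ℚ)) -
        Polynomial.aeval (MvPolynomial.X 1) (g.map (Int.castRingHom ℚ))) :
    (∃ c : ℚ, c ≠ 0 ∧ L = c • (MvPolynomial.X 0 - MvPolynomial.X 1)) ∨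
    (Even d ∧ ∃ c : ℚ, c ≠ 0 ∧ L = c • (MvPolynomial.X 0 + MvPolynomial.X 1)) := by
  set Gq : ℚ[X] := g.map (Int.castRingHom ℚ) with hGq
  have hGm : Gq.Monic := hmonic.map _
  have hGd : Gq.natDegree = d := by
    rw [hGq, Polynomial.natDegree_map_eq_of_injective
      (Int.cast_injective (α := ℚ)), hdeg]
  have hGcd1 : Gq.coeff (d - 1) = 0 := by
    rw [hGq, Polynomial.coeff_map, hcd1]; simp
  obtain ⟨M, hM⟩ := hdvd
  set a : ℚ := L.coeff (Finsupp.single 0 1) with haa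
  set b : ℚ := L.coeff (Finsupp.single 1 1) with hbb
  set c0 : ℚ := L.coeff 0 with hc00
  have hLdec : L = MvPolynomial.C c0 + MvPolynomial.C a * MvPolynomial.X 0 +
      MvPolynomial.C b * MvPolynomial.X 1 := degle_one_decomp L hL.le
  have hψF : ∀ f : Fin 2 → ℚ[X],
      MvPolynomial.aeval (R := ℚ) f (Polynomial.aeval (MvPolynomial.X 0) Gq -
        Polynomial.aeval (MvPolynomial.X 1) Gq) = Gq.comp (f 0) - Gq.comp (f 1) := by
    intro f
    rw [map_sub,
      ← Polynomial.aeval_algHom_apply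
        (MvPolynomial.aeval (R := ℚ) f : MvPolynomial (Fin 2) ℚ →ₐ[ℚ] ℚ[X]) (MvPolynomial.X 0) Gq,
      ← Polynomial.aeval_algHom_apply
        (MvPolynomial.aeval (R := ℚ) f : MvPolynomial (Fin 2) ℚ →ₐ[ℚ] ℚ[X]) (MvPolynomial.X 1) Gq,
      MvPolynomial.aeval_X, MvPolynomial.aeval_X, comp_eq_aeval, comp_eq_aeval]
  by_cases ha : a = 0
  · -- then b ≠ 0 and we get a contradiction
    exfalso
    have hb : b ≠ 0 := by
      intro hb0
      rw [hLdec, ha, hb0] at hL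
      simp at hL
    set c'' : ℚ := c0 / b with hc''
    have hbc : b * c'' = c0 := mul_div_cancel₀ _ hb
    have hLdec'' : L = MvPolynomial.C b * (MvPolynomial.C c'' + MvPolynomial.X 1) := by
      rw [hLdec, ha, MvPolynomial.C_0, ← hbc, MvPolynomial.C_mul]; ring
    set f : Fin 2 → ℚ[X] := ![X, C (-c'')] with hf
    have hψL : MvPolynomial.aeval f L = 0 := by
      rw [hLdec'']
      simp [hf, Polynomial.algebraMap_eq]
    have h0 : Gq.comp (f 0) - Gq.comp (f 1) = 0 := by
      rw [← hψF f, hM, map_mul, hψL, zero_mul]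
    simp only [hf, Matrix.cons_val_zero, Matrix.cons_val_one, Matrix.head_cons,
      comp_X, comp_C] at h0
    have := congrArg Polynomial.natDegree (sub_eq_zero.mp h0)
    rw [hGd, natDegree_C] at this
    omega
  · -- main case
    set b' : ℚ := b / a with hb'
    set c' : ℚ := c0 / a with hc'
    have hab : a * b' = b := mul_div_cancel₀ _ ha
    have hac : a * c' = c0 := mul_div_cancel₀ _ ha
    have hLdec' : L = MvPolynomial.C a *
        (MvPolynomial.C c' + MvPolynomial.X 0 + MvPolynomial.C b' * MvPolynomial.X 1) := by
      rw [hLdec, ← hab, ← hac, MvPolynomial.C_mul, MvPolynomial.C_mul]; ring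
    set l : ℚ := -b' with hl
    set μ : ℚ := -c' with hμdef
    set qlin : ℚ[X] := C μ + C l * X with hqlin
    set f : Fin 2 → ℚ[X] := ![qlin, X] with hf
    have hψL : MvPolynomial.aeval f L = 0 := by
      rw [hLdec']
      simp [hf, hqlin, Polynomial.algebraMap_eq, hl, hμdef]
      try ring
    have h0 : Gq.comp (f 0) - Gq.comp (f 1) = 0 := by
      rw [← hψF f, hM, map_mul, hψL, zero_mul]
    simp only [hf, Matrix.cons_val_zero, Matrix.cons_val_one, Matrix.head_cons, comp_X] at h0
    have hcomp : Gq.comp qlin = Gq := sub_eq_zero.mp h0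
    -- iterated derivatives
    set e : ℚ := (d.descFactorial (d - 1) : ℚ) with he
    have hepos : e ≠ 0 := by
      have h1 : d.descFactorial (d - 1) ≠ 0 := by
        rw [Ne, Nat.descFactorial_eq_zero_iff_lt]; omega
      rw [he]
      exact_mod_cast h1
    have hnd : (derivative^[d - 1] Gq).natDegree ≤ 1 :=
      le_trans (natDegree_iterate_derivative _ _) (by omega)
    have hc1 : (derivative^[d - 1] Gq).coeff 1 = e := by
      rw [coeff_iterate_derivative, show 1 + (d - 1) = d from by omega]
      rw [show Gq.coeff d = 1 from by rw [← hGd]; exact hGm.coeff_natDegree]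
      simp [he]
    have hc0' : (derivative^[d - 1] Gq).coeff 0 = 0 := by
      rw [coeff_iterate_derivative, show 0 + (d - 1) = d - 1 from by omega, hGcd1, smul_zero]
    have hder : derivative^[d - 1] Gq = C e * X := by
      rw [eq_X_add_C_of_natDegree_le_one hnd, hc1, hc0', map_zero, add_zero]
    have hkey : C (l ^ (d - 1)) * ((C e * X).comp qlin) = C e * X := by
      rw [← hder, ← iter_deriv_comp_linear l μ (d - 1) Gq, ← hqlin, hcomp, hder]
    rw [mul_comp, C_comp, X_comp] at hkey
    have hk0 := congrArg (Polynomial.eval 0) hkey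
    have hk1 := congrArg (Polynomial.eval 1) hkey
    simp only [hqlin, eval_mul, eval_add, eval_C, eval_X, mul_zero, add_zero, mul_one]
      at hk1 hk0
    -- hk0 : l ^ (d-1) * (e * μ) = 0 ; hk1 : l ^ (d-1) * (e * (μ + l)) = e
    have hld : l ^ d = 1 := by
      have : l ^ (d - 1) * l * e = 1 * e := by linear_combination hk1 - hk0
      have h2 := mul_right_cancel₀ hepos this
      rwa [← pow_succ, show d - 1 + 1 = d from by omega] at h2
    have hlne : l ≠ 0 := by
      intro h
      rw [h, zero_pow (by omega : d ≠ 0)] at hld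
      exact one_ne_zero hld.symm
    have hμ0 : μ = 0 := by
      rcases mul_eq_zero.mp hk0 with h | h
      · exact absurd h (pow_ne_zero _ hlne)
      · rcases mul_eq_zero.mp h with h' | h'
        · exact absurd h' hepos
        · exact h'
    have hc'0 : c' = 0 := by rw [hμdef] at hμ0; linarith
    rcases (pow_eq_one_iff_of_ne_zero (by omega : d ≠ 0)).mp hld with h1 | ⟨hm1, heven⟩
    · left
      refine ⟨a, ha, ?_⟩
      have hb'v : b' = -1 := by rw [hl] at h1; linarith
      rw [hLdec', hc'0, hb'v, MvPolynomial.smul_eq_C_mul]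
      simp only [map_zero, map_neg, map_one]; ring
    · right
      refine ⟨heven, a, ha, ?_⟩
      have hb'v : b' = 1 := by rw [hl] at hm1; linarith
      rw [hLdec', hc'0, hb'v, MvPolynomial.smul_eq_C_mul]
      simp only [map_zero, map_one]; ring
end
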